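/- Let P be 2n points in convex position and S a perfect matching on P by straight segments. If a segment p_a p_b of S (with endpoints indexed along the convex hull) has crossings, and among all segments of S with crossings it minimizes the crossing depth, then flipping it with the segment through the median witness point produces a segment whose crossing depth is at most half the crossing depth of p_a p_b. -/

import Mathlib

noncomputable section
open scoped Classical

abbrev Pt := EuclideanSpace ℝ (Fin 2)

def SegCross (a b c d : Pt) : Prop :=
  ∃ x, x ∈ openSegment ℝ a b ∧ x ∈ openSegment ℝ c d ∧
    ∀ y ∈ segment ℝ a b, y ∈ segment ℝ c d → y = x

/-- Orientation determinant of the triple `(a, b, c)`. -/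
def ori (a b c : Pt) : ℝ := (b 0 - a 0) * (c 1 - a 1) - (b 1 - a 1) * (c 0 - a 0)

/-- The points `p 0, …, p (m-1)` are in convex position, sorted counterclockwise. -/
def CCWConvex (m : ℕ) (p : Fin m → Pt) : Prop :=
  ∀ i j k : Fin m, i < j → j < k → 0 < ori (p i) (p j) (p k)

/-- The segments indexed by `e` and `e'` cross. -/
def SegCrossP (m : ℕ) (p : Fin m → Pt) (e e' : Fin m × Fin m) : Prop :=
  SegCross (p e.1) (p e.2) (p e'.1) (p e'.2)

/-- The segment `e` of `S` is involved in at least one crossing. -/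
def HasCrossIn (m : ℕ) (p : Fin m → Pt) (S : Finset (Fin m × Fin m))
    (e : Fin m × Fin m) : Prop :=
  ∃ e' ∈ S, e' ≠ e ∧ SegCrossP m p e e'

/-- The crossing depth of the segment `e`: the number of indices `k` strictly
between the endpoint indices of `e` such that `p k` is an endpoint of a segment
of `S` involved in a crossing. -/
noncomputable def cDepth (m : ℕ) (p : Fin m → Pt) (S : Finset (Fin m × Fin m))
    (e : Fin m × Fin m) : ℕ :=
  {k : Fin m | e.1 < k ∧ k < e.2 ∧
    ∃ e' ∈ S, (k = e'.1 ∨ k = e'.2) ∧ HasCrossIn m p S e'}.ncard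

/-- Normalize an index pair so that the smaller index comes first. -/
def nrm (m : ℕ) (i j : Fin m) : Fin m × Fin m := if i ≤ j then (i, j) else (j, i)

/-! In convex position two chords with distinct endpoints cross exactly when their endpoints
alternate along the hull. Let `T` be the matching after the flip and `k ≠ q` a point strictly
between `a` and `b` that is an endpoint of a segment `g` crossing some `f` in `T`. Then `g` is an
old segment. If `f` is old too, or `g` crosses `p_a p_b`, then `k` already was a witness for `S`.
Otherwise both endpoints of `g` lie between `a` and `b`, so the only endpoint of `f` (among
`a, b, q, c`) that `g` can separate is `q`, and `g` crosses the old segment `q c`.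
So the new segment `p_a p_q` sees at most the `⌈d/2⌉ - 1` witnesses before `q`, and `p_q p_b`
at most the `⌊d/2⌋` witnesses after it. -/

lemma ori_smul_add_smul (a b u v : Pt) {s t : ℝ} (h : s + t = 1) :
    ori a b (s • u + t • v) = s * ori a b u + t * ori a b v := by
  obtain rfl : s = 1 - t := by linarith
  simp only [ori, PiLp.add_apply, PiLp.smul_apply, smul_eq_mul]
  ring

lemma ori_swap (a b c : Pt) : ori a c b = -ori a b c := by
  simp only [ori]; ring

lemma ori_rotate (a b c : Pt) : ori b c a = ori a b c := by
  simp only [ori]; ring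

lemma ori_eq_zero_of_mem_segment {a b x : Pt} (hx : x ∈ segment ℝ a b) : ori a b x = 0 := by
  obtain ⟨s, t, -, -, hst, rfl⟩ := hx
  rw [ori_smul_add_smul a b a b hst]
  simp only [ori]; ring

lemma SegCross.symm {a b c d : Pt} (h : SegCross a b c d) : SegCross c d a b := by
  obtain ⟨x, hab, hcd, huniq⟩ := h
  exact ⟨x, hcd, hab, fun y hy₁ hy₂ => huniq y hy₂ hy₁⟩

lemma SegCross.swap_right {a b c d : Pt} (h : SegCross a b c d) : SegCross a b d c := by
  rwa [SegCross, openSegment_symm ℝ d c, segment_symm ℝ d c]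

lemma not_segCross_of_mul_ori_pos {a b c d : Pt} (h : 0 < ori a b c * ori a b d) :
    ¬ SegCross a b c d := by
  rintro ⟨x, hab, ⟨s, t, hs, ht, hst, rfl⟩, -⟩
  have hx := ori_eq_zero_of_mem_segment (openSegment_subset_segment ℝ a b hab)
  rw [ori_smul_add_smul a b c d hst] at hx
  rcases mul_pos_iff.mp h with ⟨hc, hd⟩ | ⟨hc, hd⟩ <;> nlinarith

lemma eq_of_ori_eq_zero {a b c d x y : Pt} (hK : ori a b d ≠ ori a b c)
    (hx₁ : ori a b x = 0) (hx₂ : ori c d x = 0) (hy₁ : ori a b y = 0) (hy₂ : ori c d y = 0) :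
    y = x := by
  set K := (b 0 - a 0) * (d 1 - c 1) - (b 1 - a 1) * (d 0 - c 0)
  have hK' : K ≠ 0 := fun h => hK (by simp only [ori] at *; linear_combination h)
  simp only [ori] at hx₁ hx₂ hy₁ hy₂
  have h₀ : K * (x 0 - y 0) = 0 := by
    linear_combination (d 0 - c 0) * (hx₁ - hy₁) - (b 0 - a 0) * (hx₂ - hy₂)
  have h₁ : K * (x 1 - y 1) = 0 := by
    linear_combination (d 1 - c 1) * (hx₁ - hy₁) - (b 1 - a 1) * (hx₂ - hy₂)
  ext i
  fin_cases i
  · exact (sub_eq_zero.mp ((mul_eq_zero.mp h₀).resolve_left hK')).symm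
  · exact (sub_eq_zero.mp ((mul_eq_zero.mp h₁).resolve_left hK')).symm

lemma exists_mem_openSegment_ori_eq_zero {a b c d : Pt} (hc : ori a b c < 0)
    (hd : 0 < ori a b d) : ∃ x ∈ openSegment ℝ c d, ori a b x = 0 := by
  have hden : ori a b c - ori a b d < 0 := by linarith
  set t := ori a b c / (ori a b c - ori a b d)
  refine ⟨(1 - t) • c + t • d, ⟨1 - t, t, ?_, ?_, by ring, rfl⟩, ?_⟩
  · linarith [(div_lt_one_of_neg hden).mpr (by linarith : ori a b c - ori a b d < ori a b c)]
  · exact div_pos_of_neg_of_neg hc hden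
  · have ht : t * (ori a b c - ori a b d) = ori a b c := div_mul_cancel₀ _ hden.ne
    rw [ori_smul_add_smul a b c d (by ring)]
    linear_combination -ht

lemma segCross_of_ori_signs {a b c d : Pt} (hc : ori a b c < 0) (hd : 0 < ori a b d)
    (ha : 0 < ori c d a) (hb : ori c d b < 0) : SegCross a b c d := by
  obtain ⟨x, hxcd, hx⟩ := exists_mem_openSegment_ori_eq_zero hc hd
  obtain ⟨y, hyab, hy⟩ := exists_mem_openSegment_ori_eq_zero hb ha
  rw [openSegment_symm] at hyab
  have hK : ori a b d ≠ ori a b c := by linarith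
  have hx' := ori_eq_zero_of_mem_segment (openSegment_subset_segment ℝ c d hxcd)
  have hyx : y = x := eq_of_ori_eq_zero hK hx hx'
    (ori_eq_zero_of_mem_segment (openSegment_subset_segment ℝ a b hyab)) hy
  refine ⟨x, hyx ▸ hyab, hxcd, fun z hzab hzcd => ?_⟩
  exact eq_of_ori_eq_zero hK hx hx' (ori_eq_zero_of_mem_segment hzab)
    (ori_eq_zero_of_mem_segment hzcd)

lemma lt_or_lt_of_not_mem_Ioo {α : Type*} [LinearOrder α] {u v z : α} (hz : z ≠ u ∧ z ≠ v)
    (hzuv : z ∉ Set.Ioo u v) : z < u ∨ v < z := by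
  by_contra! h
  exact hzuv ⟨h.1.lt_of_ne hz.1.symm, h.2.lt_of_ne hz.2⟩

namespace CCWConvex

variable {m : ℕ} {p : Fin m → Pt}

lemma ori_pos_of_lt_or_lt (hconv : CCWConvex m p) {i j w : Fin m} (hij : i < j)
    (hw : w < i ∨ j < w) : 0 < ori (p i) (p j) (p w) := by
  rcases hw with hw | hw
  · rw [ori_rotate]
    exact hconv w i j hw hij
  · exact hconv i j w hij hw

lemma ori_neg_of_mem_Ioo (hconv : CCWConvex m p) {i j w : Fin m} (hw : w ∈ Set.Ioo i j) :
    ori (p i) (p j) (p w) < 0 := by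
  rw [ori_swap (p i) (p w) (p j)]
  exact neg_lt_zero.mpr (hconv i w j hw.1 hw.2)

lemma segCross_of_lt_of_lt_of_lt (hconv : CCWConvex m p) {i j k l : Fin m} (hik : i < k)
    (hkj : k < j) (hjl : j < l) : SegCross (p i) (p j) (p k) (p l) :=
  segCross_of_ori_signs (hconv.ori_neg_of_mem_Ioo ⟨hik, hkj⟩)
    (hconv.ori_pos_of_lt_or_lt (hik.trans hkj) (Or.inr hjl))
    (hconv.ori_pos_of_lt_or_lt (hkj.trans hjl) (Or.inl hik))
    (hconv.ori_neg_of_mem_Ioo ⟨hkj, hjl⟩)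

lemma segCross_of_mem_Ioo_of_not_mem_Ioo (hconv : CCWConvex m p) {u v x y : Fin m}
    (hx : x ∈ Set.Ioo u v) (hy : y ≠ u ∧ y ≠ v) (hyuv : y ∉ Set.Ioo u v) :
    SegCross (p u) (p v) (p x) (p y) := by
  rcases lt_or_lt_of_not_mem_Ioo hy hyuv with hyu | hvy
  · exact (hconv.segCross_of_lt_of_lt_of_lt hyu hx.1 hx.2).symm.swap_right
  · exact hconv.segCross_of_lt_of_lt_of_lt hx.1 hx.2 hvy

theorem segCross_iff (hconv : CCWConvex m p) {u v x y : Fin m} (huv : u < v)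
    (hx : x ≠ u ∧ x ≠ v) (hy : y ≠ u ∧ y ≠ v) :
    SegCross (p u) (p v) (p x) (p y) ↔ (x ∈ Set.Ioo u v ↔ y ∉ Set.Ioo u v) := by
  constructor
  · intro h
    by_contra hsep
    by_cases hxuv : x ∈ Set.Ioo u v
    · have hyuv : y ∈ Set.Ioo u v := by tauto
      exact not_segCross_of_mul_ori_pos (mul_pos_of_neg_of_neg
        (hconv.ori_neg_of_mem_Ioo hxuv) (hconv.ori_neg_of_mem_Ioo hyuv)) h
    · have hyuv : y ∉ Set.Ioo u v := by tauto
      exact not_segCross_of_mul_ori_pos (mul_pos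
        (hconv.ori_pos_of_lt_or_lt huv (lt_or_lt_of_not_mem_Ioo hx hxuv))
        (hconv.ori_pos_of_lt_or_lt huv (lt_or_lt_of_not_mem_Ioo hy hyuv))) h
  · intro hsep
    by_cases hxuv : x ∈ Set.Ioo u v
    · exact hconv.segCross_of_mem_Ioo_of_not_mem_Ioo hxuv hy (hsep.mp hxuv)
    · exact (hconv.segCross_of_mem_Ioo_of_not_mem_Ioo (by tauto) hx hxuv).swap_right

lemma mem_Ioo_or_mem_Ioo_of_segCross (hconv : CCWConvex m p) {u v x y : Fin m} (huv : u < v)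
    (hx : x ≠ u ∧ x ≠ v) (hy : y ≠ u ∧ y ≠ v) (h : SegCross (p u) (p v) (p x) (p y)) :
    x ∈ Set.Ioo u v ∨ y ∈ Set.Ioo u v := by
  have := (hconv.segCross_iff huv hx hy).mp h
  tauto

end CCWConvex

section Matching

variable {m : ℕ} {p : Fin m → Pt} {S : Finset (Fin m × Fin m)}

def IsCrossEnd (m : ℕ) (p : Fin m → Pt) (S : Finset (Fin m × Fin m)) (k : Fin m) : Prop :=
  ∃ e ∈ S, (k = e.1 ∨ k = e.2) ∧ HasCrossIn m p S e

lemma nrm_of_le {i j : Fin m} (h : i ≤ j) : nrm m i j = (i, j) := if_pos h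

lemma nrm_of_lt {i j : Fin m} (h : j < i) : nrm m i j = (j, i) := if_neg h.not_ge

lemma mem_insert_nrm_insert_nrm {R : Finset (Fin m × Fin m)} {x y z w : Fin m}
    {f : Fin m × Fin m} (hf : f ∈ insert (nrm m x y) (insert (nrm m z w) R)) :
    f ∈ R ∨ f.1 ∈ ({x, y, z, w} : Set (Fin m)) ∧ f.2 ∈ ({x, y, z, w} : Set (Fin m)) := by
  rcases Finset.mem_insert.mp hf with rfl | hf
  · right; unfold nrm; split_ifs <;> simp
  rcases Finset.mem_insert.mp hf with rfl | hf
  · right; unfold nrm; split_ifs <;> simp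
  exact Or.inl hf

lemma segCrossP_iff_of_endpoints {g e : Fin m × Fin m} {q c : Fin m}
    (hc : (q = e.1 ∧ c = e.2) ∨ (q = e.2 ∧ c = e.1)) :
    SegCrossP m p g e ↔ SegCross (p g.1) (p g.2) (p q) (p c) := by
  rcases hc with ⟨rfl, rfl⟩ | ⟨rfl, rfl⟩
  · rfl
  · exact ⟨SegCross.swap_right, SegCross.swap_right⟩

lemma endpoint_ne_of_ne (hmatch : ∀ i : Fin m, ∃! e, e ∈ S ∧ (i = e.1 ∨ i = e.2))
    {g h : Fin m × Fin m} (hg : g ∈ S) (hh : h ∈ S) (hgh : g ≠ h) {x : Fin m}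
    (hx : x = g.1 ∨ x = g.2) : x ≠ h.1 ∧ x ≠ h.2 :=
  ⟨fun h₁ => hgh ((hmatch x).unique ⟨hg, hx⟩ ⟨hh, Or.inl h₁⟩),
    fun h₂ => hgh ((hmatch x).unique ⟨hg, hx⟩ ⟨hh, Or.inr h₂⟩)⟩

lemma not_mem_Ioo_of_segCrossP (hconv : CCWConvex m p)
    (hmatch : ∀ i : Fin m, ∃! e, e ∈ S ∧ (i = e.1 ∨ i = e.2)) {a b q c : Fin m}
    {e' : Fin m × Fin m} (hab : a < b) (habS : (a, b) ∈ S) (he' : e' ∈ S) (he'ab : e' ≠ (a, b))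
    (hc : (q = e'.1 ∧ c = e'.2) ∨ (q = e'.2 ∧ c = e'.1)) (hq : q ∈ Set.Ioo a b)
    (hcross : SegCrossP m p (a, b) e') : c ∉ Set.Ioo a b :=
  ((hconv.segCross_iff hab
    (endpoint_ne_of_ne hmatch he' habS he'ab (hc.imp And.left And.left))
    (endpoint_ne_of_ne hmatch he' habS he'ab (hc.symm.imp And.right And.right))).mp
    ((segCrossP_iff_of_endpoints hc).mp hcross)).mp hq

lemma ne_endpoints_of_ne_of_ne (hmatch : ∀ i : Fin m, ∃! e, e ∈ S ∧ (i = e.1 ∨ i = e.2))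
    {a b q c : Fin m} {g e' : Fin m × Fin m} (hg : g ∈ S) (hab : (a, b) ∈ S) (he' : e' ∈ S)
    (hgab : g ≠ (a, b)) (hge' : g ≠ e') (hc : (q = e'.1 ∧ c = e'.2) ∨ (q = e'.2 ∧ c = e'.1)) :
    ∀ x ∈ ({a, b, q, c} : Set (Fin m)), x ≠ g.1 ∧ x ≠ g.2 := by
  have h₁ := endpoint_ne_of_ne hmatch hg hab hgab (Or.inl rfl)
  have h₂ := endpoint_ne_of_ne hmatch hg hab hgab (Or.inr rfl)
  have h₃ := endpoint_ne_of_ne hmatch hg he' hge' (Or.inl rfl)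
  have h₄ := endpoint_ne_of_ne hmatch hg he' hge' (Or.inr rfl)
  rintro x (rfl | rfl | rfl | rfl) <;> rcases hc with ⟨rfl, rfl⟩ | ⟨rfl, rfl⟩ <;>
    exact ⟨by tauto, by tauto⟩

theorem isCrossEnd_of_isCrossEnd_flip (hconv : CCWConvex m p)
    (hmatch : ∀ i : Fin m, ∃! e, e ∈ S ∧ (i = e.1 ∨ i = e.2)) (horder : ∀ e ∈ S, e.1 < e.2)
    {a b q c : Fin m} {e' : Fin m × Fin m} (hab : (a, b) ∈ S) (he' : e' ∈ S)
    (hc : (q = e'.1 ∧ c = e'.2) ∨ (q = e'.2 ∧ c = e'.1)) (hc_out : c ∉ Set.Ioo a b)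
    {V : Set (Fin m)} (hV : V ⊆ {a, b, q, c}) {T : Finset (Fin m × Fin m)}
    (hT : ∀ f ∈ T, f ∈ (S.erase (a, b)).erase e' ∨ f.1 ∈ V ∧ f.2 ∈ V)
    {k : Fin m} (hk : k ∈ Set.Ioo a b) (hkq : k ≠ q) (hkT : IsCrossEnd m p T k) :
    IsCrossEnd m p S k := by
  have hV_Ioo : ∀ x ∈ V, x ∈ Set.Ioo a b → x = q := by
    intro x hxV hx
    rcases hV hxV with rfl | rfl | rfl | rfl
    · exact absurd hx.1 (lt_irrefl _)
    · exact absurd hx.2 (lt_irrefl _)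
    · rfl
    · exact absurd hx hc_out
  obtain ⟨g, hgT, hkg, f, hfT, hfg, hgf⟩ := hkT
  obtain ⟨hge', hgab, hgS⟩ : g ≠ e' ∧ g ≠ (a, b) ∧ g ∈ S := by
    rcases hT g hgT with hg | ⟨hg₁, hg₂⟩
    · simpa only [Finset.mem_erase] using hg
    · exact absurd (hV_Ioo k (by rcases hkg with rfl | rfl <;> assumption) hk) hkq
  have hg_ne := ne_endpoints_of_ne_of_ne hmatch hgS hab he' hgab hge' hc
  rcases hT f hfT with hfS | ⟨hf₁, hf₂⟩
  · exact ⟨g, hgS, hkg, f, Finset.mem_of_mem_erase (Finset.mem_of_mem_erase hfS), hfg, hgf⟩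
  by_cases hg_ab : SegCrossP m p g (a, b)
  · exact ⟨g, hgS, hkg, (a, b), hab, hgab.symm, hg_ab⟩
  -- `g` does not cross `(a, b)` but has the endpoint `k` inside its arc
  have hg_in : Set.Ioo g.1 g.2 ⊆ Set.Ioo a b := by
    have hsame := (hconv.segCross_iff (horder _ hab)
      (endpoint_ne_of_ne hmatch hgS hab hgab (Or.inl rfl))
      (endpoint_ne_of_ne hmatch hgS hab hgab (Or.inr rfl))).not.mp (fun h => hg_ab h.symm)
    have hg₁ : g.1 ∈ Set.Ioo a b := by rcases hkg with rfl | rfl <;> tauto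
    have hg₂ : g.2 ∈ Set.Ioo a b := by rcases hkg with rfl | rfl <;> tauto
    exact Set.Ioo_subset_Ioo hg₁.1.le hg₂.2.le
  have hq : q ∈ Set.Ioo g.1 g.2 := by
    rcases hconv.mem_Ioo_or_mem_Ioo_of_segCross (horder g hgS) (hg_ne _ (hV hf₁)) (hg_ne _ (hV hf₂)) hgf
      with h | h
    · exact hV_Ioo _ hf₁ (hg_in h) ▸ h
    · exact hV_Ioo _ hf₂ (hg_in h) ▸ h
  refine ⟨g, hgS, hkg, e', he', hge'.symm, (segCrossP_iff_of_endpoints hc).mpr ?_⟩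
  exact hconv.segCross_of_mem_Ioo_of_not_mem_Ioo hq (hg_ne c (by simp)) (fun h => hc_out (hg_in h))

lemma cDepth_le_ncard_of_flip (hconv : CCWConvex m p)
    (hmatch : ∀ i : Fin m, ∃! e, e ∈ S ∧ (i = e.1 ∨ i = e.2)) (horder : ∀ e ∈ S, e.1 < e.2)
    {a b q c : Fin m} {e' : Fin m × Fin m} (hab : (a, b) ∈ S) (he' : e' ∈ S)
    (hc : (q = e'.1 ∧ c = e'.2) ∨ (q = e'.2 ∧ c = e'.1)) (hc_out : c ∉ Set.Ioo a b)
    {V : Set (Fin m)} (hV : V ⊆ {a, b, q, c}) {T : Finset (Fin m × Fin m)}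
    (hT : ∀ f ∈ T, f ∈ (S.erase (a, b)).erase e' ∨ f.1 ∈ V ∧ f.2 ∈ V)
    {s : Fin m × Fin m} {t : Set (Fin m)}
    (hs : ∀ k, s.1 < k → k < s.2 → k ∈ Set.Ioo a b ∧ k ≠ q ∧ (IsCrossEnd m p S k → k ∈ t)) :
    cDepth m p T s ≤ t.ncard :=
  Set.ncard_le_ncard fun k ⟨h₁, h₂, hk⟩ =>
    have ⟨hk_ab, hkq, ht⟩ := hs k h₁ h₂
    ht (isCrossEnd_of_isCrossEnd_flip hconv hmatch horder hab he' hc hc_out hV hT hk_ab hkq hk)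

end Matching

lemma ncard_between_eq_add {α : Type*} [LinearOrder α] [Finite α] (P : α → Prop) {a q b : α}
    (haq : a ≤ q) (hqb : q < b) :
    {k | a < k ∧ k < b ∧ P k}.ncard =
      {k | a < k ∧ k ≤ q ∧ P k}.ncard + {k | q < k ∧ k < b ∧ P k}.ncard := by
  rw [← Set.ncard_union_eq]
  · congr 1
    ext k
    simp only [Set.mem_union]
    constructor
    · rintro ⟨hak, hkb, hk⟩
      rcases le_or_gt k q with hkq | hqk
      exacts [Or.inl ⟨hak, hkq, hk⟩, Or.inr ⟨hqk, hkb, hk⟩]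
    · rintro (⟨hak, hkq, hk⟩ | ⟨hqk, hkb, hk⟩)
      exacts [⟨hak, hkq.trans_lt hqb, hk⟩, ⟨haq.trans_lt hqk, hkb, hk⟩]
  · exact Set.disjoint_left.mpr fun k hk hk' => hk'.1.not_ge hk.2.1

theorem median_flip_halves_crossing_depth_general
    (m : ℕ) (p : Fin m → Pt) (hconv : CCWConvex m p)
    (S : Finset (Fin m × Fin m))
    (hmatch : ∀ i : Fin m, ∃! e, e ∈ S ∧ (i = e.1 ∨ i = e.2))
    (horder : ∀ e ∈ S, e.1 < e.2)
    (a b : Fin m) (hab : (a, b) ∈ S)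
    (q : Fin m) (haq : a < q) (hqb : q < b)
    (hqmed : {k : Fin m | a < k ∧ k ≤ q ∧
        ∃ e' ∈ S, (k = e'.1 ∨ k = e'.2) ∧ HasCrossIn m p S e'}.ncard
      = (cDepth m p S (a, b) + 1) / 2)
    (e' : Fin m × Fin m) (he' : e' ∈ S) (he'ab : e' ≠ (a, b))
    (c : Fin m) (hc : (q = e'.1 ∧ c = e'.2) ∨ (q = e'.2 ∧ c = e'.1))
    (hcross : SegCrossP m p (a, b) e') :
    (¬ SegCrossP m p (nrm m a q) (nrm m c b) →
      2 * cDepth m p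
          (insert (nrm m a q) (insert (nrm m c b) ((S.erase (a, b)).erase e')))
          (nrm m a q)
        ≤ cDepth m p S (a, b)) ∧
    (¬ SegCrossP m p (nrm m b q) (nrm m c a) →
      2 * cDepth m p
          (insert (nrm m b q) (insert (nrm m c a) ((S.erase (a, b)).erase e')))
          (nrm m b q)
        ≤ cDepth m p S (a, b)) := by
  have hc_out := not_mem_Ioo_of_segCrossP hconv hmatch (horder _ hab) hab he' he'ab hc
    ⟨haq, hqb⟩ hcross
  have hq : IsCrossEnd m p S q :=
    ⟨e', he', hc.imp And.left And.left, (a, b), hab, he'ab.symm, hcross.symm⟩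
  change {k | a < k ∧ k ≤ q ∧ IsCrossEnd m p S k}.ncard = _ at hqmed
  have hsplit : cDepth m p S (a, b) = _ :=
    ncard_between_eq_add (IsCrossEnd m p S) (a := a) (b := b) haq.le hqb
  refine ⟨fun _ => ?_, fun _ => ?_⟩
  · have hA := Set.ncard_sdiff_singleton_add_one (s := {k | a < k ∧ k ≤ q ∧ IsCrossEnd m p S k})
      ⟨haq, le_rfl, hq⟩
    refine (Nat.mul_le_mul_left 2 (cDepth_le_ncard_of_flip hconv hmatch horder hab he' hc hc_out
      (by simp [Set.insert_subset_iff]) (fun _ => mem_insert_nrm_insert_nrm)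
      (t := {k | a < k ∧ k ≤ q ∧ IsCrossEnd m p S k} \ {q}) ?_)).trans (by omega)
    rw [nrm_of_le haq.le]
    exact fun k hak hkq => ⟨⟨hak, hkq.trans hqb⟩, hkq.ne, fun hk => ⟨⟨hak, hkq.le, hk⟩, hkq.ne⟩⟩
  · refine (Nat.mul_le_mul_left 2 (cDepth_le_ncard_of_flip hconv hmatch horder hab he' hc hc_out
      (by simp [Set.insert_subset_iff]) (fun _ => mem_insert_nrm_insert_nrm)
      (t := {k | q < k ∧ k < b ∧ IsCrossEnd m p S k}) ?_)).trans (by omega)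
    rw [nrm_of_lt hqb]
    exact fun k hqk hkb => ⟨⟨haq.trans hqk, hkb⟩, hqk.ne', fun hk => ⟨hqk, hkb, hk⟩⟩

/-- Flipping a minimum-crossing-depth segment `p_a p_b` of a perfect matching on
points in convex position with the segment through the median witness point `q`
produces a segment (the inserted segment incident to `q`) whose crossing depth in
the new configuration is at most half the crossing depth of `p_a p_b`. -/
theorem median_flip_halves_crossing_depth
    (m : ℕ) (p : Fin m → Pt) (hconv : CCWConvex m p)
    (S : Finset (Fin m × Fin m))
    (hmatch : ∀ i : Fin m, ∃! e, e ∈ S ∧ (i = e.1 ∨ i = e.2))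
    (horder : ∀ e ∈ S, e.1 < e.2)
    (a b : Fin m) (hab : (a, b) ∈ S)
    (hcr : HasCrossIn m p S (a, b))
    (hmin : ∀ e ∈ S, HasCrossIn m p S e → cDepth m p S (a, b) ≤ cDepth m p S e)
    (q : Fin m) (haq : a < q) (hqb : q < b)
    (hqwitness : ∃ e' ∈ S, (q = e'.1 ∨ q = e'.2) ∧ HasCrossIn m p S e')
    (hqmed : {k : Fin m | a < k ∧ k ≤ q ∧
        ∃ e' ∈ S, (k = e'.1 ∨ k = e'.2) ∧ HasCrossIn m p S e'}.ncard
      = (cDepth m p S (a, b) + 1) / 2)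
    (e' : Fin m × Fin m) (he' : e' ∈ S) (he'ab : e' ≠ (a, b))
    (c : Fin m) (hc : (q = e'.1 ∧ c = e'.2) ∨ (q = e'.2 ∧ c = e'.1))
    (hcross : SegCrossP m p (a, b) e') :
    (¬ SegCrossP m p (nrm m a q) (nrm m c b) →
      2 * cDepth m p
          (insert (nrm m a q) (insert (nrm m c b) ((S.erase (a, b)).erase e')))
          (nrm m a q)
        ≤ cDepth m p S (a, b)) ∧
    (¬ SegCrossP m p (nrm m b q) (nrm m c a) →
      2 * cDepth m p
          (insert (nrm m b q) (insert (nrm m c a) ((S.erase (a, b)).erase e')))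
          (nrm m b q)
        ≤ cDepth m p S (a, b)) :=
  median_flip_halves_crossing_depth_general m p hconv S hmatch horder a b hab q haq hqb hqmed e' he'
    he'ab c hc hcross
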